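/- Let σ>0 and C₀>0, and let f,g:ℝ³→ℝ be measurable functions with |f(x)|≤C₀e^{−σ|x|} and |g(x)|≤C₀e^{−σ|x|} for all x∈ℝ³. Then there exist constants γ>0 and C>0, depending only on σ and C₀, such that for all ε>0 and all y,z∈ℝ³: ∫_{ℝ³}|f((x−y)/ε)|·|g((x−z)/ε)| dx ≤ C ε³ e^{−γ|y−z|/ε}. -/

import Mathlib

/-!
Since `‖a‖ + ‖b‖ ≥ ‖a - b‖`, the product `e^{-σ‖a‖} e^{-σ‖b‖}` is at most
`e^{-σ‖a - b‖/2} e^{-σ‖a‖/2}`. With `a = (x - y)/ε` and `b = (x - z)/ε` the first factor is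
the constant `e^{-σ|y - z|/(2ε)}`, and the second integrates over `x` to `ε³` times the
integral of `e^{-σ|u|/2}`, which is finite because `e^{-c|u|}` is dominated by a multiple of
`(1 + |u|)^{-(d+1)}` in dimension `d`.
-/

open MeasureTheory Metric Real Filter Set

noncomputable section

abbrev E3 : Type := EuclideanSpace ℝ (Fin 3)

open Module

lemma exp_neg_mul_le_mul_one_add_rpow_neg {c t : ℝ} (hc : 0 < c) (ht : 0 ≤ t) (n : ℕ) :
    exp (-c * t) ≤ exp c * n.factorial / c ^ n * (1 + t) ^ (-(n : ℝ)) := by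
  calc exp (-c * t) = exp c / exp (c * (1 + t)) := by rw [← exp_sub]; ring_nf
    _ ≤ exp c / ((c * (1 + t)) ^ n / n.factorial) :=
      div_le_div_of_nonneg_left (exp_pos c).le (by positivity)
        (pow_div_factorial_le_exp _ (by positivity) n)
    _ = exp c * n.factorial / c ^ n * (1 + t) ^ (-(n : ℝ)) := by
      rw [rpow_neg (by positivity), rpow_natCast, mul_pow]
      field_simp

lemma exp_neg_mul_norm_mul_exp_neg_mul_norm_le {E : Type*} [SeminormedAddCommGroup E]
    {σ : ℝ} (hσ : 0 ≤ σ) (a b : E) :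
    exp (-σ * ‖a‖) * exp (-σ * ‖b‖) ≤ exp (-(σ / 2) * ‖a - b‖) * exp (-(σ / 2) * ‖a‖) := by
  rw [← exp_add, ← exp_add, exp_le_exp]
  nlinarith [norm_sub_le a b, norm_nonneg a, norm_nonneg b]

section HaarMeasure

variable {E : Type*} [NormedAddCommGroup E] [NormedSpace ℝ E] [FiniteDimensional ℝ E]
  [MeasurableSpace E] [BorelSpace E] (μ : Measure E) [μ.IsAddHaarMeasure]

lemma integrable_exp_neg_mul_norm {c : ℝ} (hc : 0 < c) :
    Integrable (fun x : E => exp (-c * ‖x‖)) μ := by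
  refine ((integrable_one_add_norm (μ := μ) (r := finrank ℝ E + 1) (by simp)).const_mul
    (exp c * (finrank ℝ E + 1).factorial / c ^ (finrank ℝ E + 1))).mono'
    (by fun_prop) (Eventually.of_forall fun x => ?_)
  rw [norm_of_nonneg (exp_pos _).le]
  exact_mod_cast exp_neg_mul_le_mul_one_add_rpow_neg hc (norm_nonneg x) (finrank ℝ E + 1)

lemma integral_exp_neg_mul_norm_inv_smul_sub (c : ℝ) {ε : ℝ} (hε : 0 ≤ ε) (y : E) :
    ∫ x, exp (-c * ‖ε⁻¹ • (x - y)‖) ∂μ = ε ^ finrank ℝ E * ∫ x, exp (-c * ‖x‖) ∂μ := by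
  rw [integral_sub_right_eq_self (fun x => exp (-c * ‖ε⁻¹ • x‖)) y,
    μ.integral_comp_inv_smul_of_nonneg (fun x => exp (-c * ‖x‖)) hε, smul_eq_mul]

theorem integral_abs_comp_inv_smul_sub_mul_le {σ C₀ ε : ℝ} (hσ : 0 < σ) (hε : 0 < ε)
    {f g : E → ℝ} (hf : ∀ x, |f x| ≤ C₀ * exp (-σ * ‖x‖))
    (hg : ∀ x, |g x| ≤ C₀ * exp (-σ * ‖x‖)) (y z : E) :
    ∫ x, |f (ε⁻¹ • (x - y))| * |g (ε⁻¹ • (x - z))| ∂μ ≤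
      C₀ ^ 2 * (∫ u, exp (-(σ / 2) * ‖u‖) ∂μ) * ε ^ finrank ℝ E *
        exp (-(σ / 2) * dist y z / ε) := by
  have hdist : ∀ x, ‖ε⁻¹ • (x - y) - ε⁻¹ • (x - z)‖ = dist y z / ε := fun x => by
    rw [← smul_sub, sub_sub_sub_cancel_left, norm_smul, norm_inv, norm_of_nonneg hε.le,
      ← dist_eq_norm, dist_comm, inv_mul_eq_div]
  have hpointwise : ∀ x, |f (ε⁻¹ • (x - y))| * |g (ε⁻¹ • (x - z))| ≤
      C₀ ^ 2 * exp (-(σ / 2) * dist y z / ε) * exp (-(σ / 2) * ‖ε⁻¹ • (x - y)‖) := fun x =>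
    calc |f (ε⁻¹ • (x - y))| * |g (ε⁻¹ • (x - z))|
        ≤ C₀ * exp (-σ * ‖ε⁻¹ • (x - y)‖) * (C₀ * exp (-σ * ‖ε⁻¹ • (x - z)‖)) :=
          mul_le_mul (hf _) (hg _) (abs_nonneg _) ((abs_nonneg _).trans (hf _))
      _ = C₀ ^ 2 * (exp (-σ * ‖ε⁻¹ • (x - y)‖) * exp (-σ * ‖ε⁻¹ • (x - z)‖)) := by ring
      _ ≤ C₀ ^ 2 * (exp (-(σ / 2) * ‖ε⁻¹ • (x - y) - ε⁻¹ • (x - z)‖) *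
            exp (-(σ / 2) * ‖ε⁻¹ • (x - y)‖)) :=
          mul_le_mul_of_nonneg_left (exp_neg_mul_norm_mul_exp_neg_mul_norm_le hσ.le _ _)
            (sq_nonneg C₀)
      _ = C₀ ^ 2 * exp (-(σ / 2) * dist y z / ε) * exp (-(σ / 2) * ‖ε⁻¹ • (x - y)‖) := by
          rw [hdist, mul_div_assoc, mul_assoc]
  have hdominant : Integrable (fun x => C₀ ^ 2 * exp (-(σ / 2) * dist y z / ε) *
      exp (-(σ / 2) * ‖ε⁻¹ • (x - y)‖)) μ :=
    (((integrable_exp_neg_mul_norm μ (half_pos hσ)).comp_smul (inv_ne_zero hε.ne')).comp_sub_right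
      y).const_mul _
  calc ∫ x, |f (ε⁻¹ • (x - y))| * |g (ε⁻¹ • (x - z))| ∂μ
      ≤ ∫ x, C₀ ^ 2 * exp (-(σ / 2) * dist y z / ε) * exp (-(σ / 2) * ‖ε⁻¹ • (x - y)‖) ∂μ :=
        integral_mono_of_nonneg (Eventually.of_forall fun x => by positivity) hdominant
          (Eventually.of_forall hpointwise)
    _ = C₀ ^ 2 * (∫ u, exp (-(σ / 2) * ‖u‖) ∂μ) * ε ^ finrank ℝ E *
          exp (-(σ / 2) * dist y z / ε) := by
        rw [integral_const_mul, integral_exp_neg_mul_norm_inv_smul_sub μ _ hε.le]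
        ring

end HaarMeasure

/-- interaction estimate between two exponentially decaying profiles
rescaled by `ε` and centered at `y` and `z`: there are `γ, C > 0`, depending only on
`σ` and `C₀`, such that for all such `f, g`, all `ε > 0` and all `y, z ∈ ℝ³`,
`∫ |f((x−y)/ε)|·|g((x−z)/ε)| dx ≤ C·ε³·e^{−γ|y−z|/ε}`. -/
theorem stmt_14 (σ C₀ : ℝ) (hσ : 0 < σ) (hC₀ : 0 < C₀) :
    ∃ γ > 0, ∃ C > 0, ∀ f g : E3 → ℝ, Measurable f → Measurable g →
      (∀ x : E3, |f x| ≤ C₀ * Real.exp (-σ * ‖x‖)) →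
      (∀ x : E3, |g x| ≤ C₀ * Real.exp (-σ * ‖x‖)) →
      ∀ ε : ℝ, 0 < ε → ∀ y z : E3,
        (∫ x : E3, |f (ε⁻¹ • (x - y))| * |g (ε⁻¹ • (x - z))|) ≤
          C * ε ^ 3 * Real.exp (-γ * dist y z / ε) := by
  have hI : 0 < ∫ u : E3, exp (-(σ / 2) * ‖u‖) :=
    integral_exp_pos (integrable_exp_neg_mul_norm volume (half_pos hσ))
  refine ⟨σ / 2, half_pos hσ, C₀ ^ 2 * ∫ u : E3, exp (-(σ / 2) * ‖u‖),
    mul_pos (pow_pos hC₀ 2) hI, ?_⟩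
  intro f g _ _ hf hg ε hε y z
  simpa only [finrank_euclideanSpace_fin] using
    integral_abs_comp_inv_smul_sub_mul_le volume hσ hε hf hg y z
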